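/- arXiv:2106.03745 — 3 statements merged into one kernel-verified Lean document; each statement's English description precedes it below -/
import Mathlib

section
/- Let G be a connected strongly regular graph with parameters (n, k, λ, μ) with λ ∈ {0, 1} and k ≥ 3. Then the Gallai graph Γ(G) is 2-connected. -/
open scoped Classical

namespace GallaiSRG

open SimpleGraph

variable {V : Type*}

/-- Two edges (given as elements of `Sym2 V`) span a triangle in `G`:
they share an endpoint and their other endpoints are adjacent. -/
def SpansTriangle (G : SimpleGraph V) (e f : Sym2 V) : Prop :=
  ∃ u v w : V, e = s(u, v) ∧ f = s(u, w) ∧ G.Adj v w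

lemma SpansTriangle.symm {G : SimpleGraph V} {e f : Sym2 V}
    (h : SpansTriangle G e f) : SpansTriangle G f e := by
  obtain ⟨u, v, w, he, hf, ha⟩ := h
  exact ⟨u, w, v, hf, he, ha.symm⟩

/-- Two edges are incident: they are distinct and share an endpoint. -/
def Incident (e f : Sym2 V) : Prop :=
  e ≠ f ∧ ∃ u : V, u ∈ e ∧ u ∈ f

lemma Incident.symm {e f : Sym2 V} (h : Incident e f) : Incident f e :=
  ⟨h.1.symm, h.2.imp fun _ hu => ⟨hu.2, hu.1⟩⟩

/-- The Gallai graph of `G`: vertices are the edges of `G`, two of them adjacent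
iff the corresponding edges share an endpoint but do not span a triangle of `G`. -/
def gallai (G : SimpleGraph V) : SimpleGraph G.edgeSet where
  Adj e f := Incident (e : Sym2 V) (f : Sym2 V) ∧ ¬SpansTriangle G (e : Sym2 V) (f : Sym2 V)
  symm := ⟨fun e f h => ⟨h.1.symm, fun hs => h.2 hs.symm⟩⟩
  loopless := ⟨fun e h => h.1.1 rfl⟩

/-- The anti-Gallai graph of `G`: vertices are the edges of `G`, two of them adjacent
iff the corresponding edges span a triangle of `G`. -/
def antiGallai (G : SimpleGraph V) : SimpleGraph G.edgeSet where
  Adj e f := (e : Sym2 V) ≠ (f : Sym2 V) ∧ SpansTriangle G (e : Sym2 V) (f : Sym2 V)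
  symm := ⟨fun e f h => ⟨h.1.symm, h.2.symm⟩⟩
  loopless := ⟨fun e h => h.1 rfl⟩

/-- Edge-regularity with parameters `(N, K, L)`, phrased via `Nat.card`/`Set.ncard`
to avoid decidability assumptions: `N` vertices, `K`-regular, adjacent vertices have
exactly `L` common neighbours. -/
def IsEdgeRegularN {W : Type*} (H : SimpleGraph W) (N K L : ℕ) : Prop :=
  Nat.card W = N ∧ (∀ x : W, (H.neighborSet x).ncard = K) ∧
    ∀ x y : W, H.Adj x y → (H.neighborSet x ∩ H.neighborSet y).ncard = L

/-- The diamond graph: `K₄` minus one edge. -/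
def diamond : SimpleGraph (Fin 4) :=
  (completeGraph (Fin 4)).deleteEdges {s(0, 1)}

/-- The fan graph `F_m`: `m` triangles sharing exactly one common (central) vertex. -/
def fanGraph (m : ℕ) : SimpleGraph (Unit ⊕ Fin m × Fin 2) :=
  SimpleGraph.fromRel fun a b =>
    a = Sum.inl () ∨ ∃ i : Fin m, a = Sum.inr (i, 0) ∧ b = Sum.inr (i, 1)

/-- The semi-total point graph `R(H)`: to `H` add, for every edge, a new vertex
adjacent to both endpoints of that edge. -/
def semiTotal (H : SimpleGraph V) : SimpleGraph (V ⊕ H.edgeSet) :=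
  SimpleGraph.fromRel fun a b =>
    (∃ w w' : V, a = Sum.inl w ∧ b = Sum.inl w' ∧ H.Adj w w') ∨
    (∃ (w : V) (e : H.edgeSet), a = Sum.inl w ∧ b = Sum.inr e ∧ w ∈ (e : Sym2 V))

/-- The join `H ∨ K₁` of a graph `H` with one extra vertex (`none`). -/
def joinOne (H : SimpleGraph V) : SimpleGraph (Option V) :=
  SimpleGraph.fromRel fun a b =>
    a = none ∨ ∃ w w' : V, a = some w ∧ b = some w' ∧ H.Adj w w'

/-!
Deleting an edge `x` keeps `G` connected: every edge lies on a triangle when `λ = 1`, and on a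
cycle of length 4 or 5 when `λ = 0`. A walk in `G - x` between endpoints of two edges `e`, `f`
yields a chain of consecutive edges sharing a vertex, so it suffices to join two edges `ua`, `ub`
in `Γ(G) - x`. They are adjacent there unless `a ~ b`. Then `λ = 1`, so `k` is even (`kλ` is twice
the number of edges inside a neighbourhood), hence `k ≥ 4`, and some third edge `uc ≠ x` works:
`c` is adjacent to neither `a` nor `b`, as `b` is the only common neighbour of `u` and `a`.
-/

end GallaiSRG

namespace SimpleGraph

variable {V : Type*}

section Regular

variable {G : SimpleGraph V} [Fintype V] [DecidableRel G.Adj] {k : ℕ}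

lemma IsRegularOfDegree.exists_adj_notMem (hG : G.IsRegularOfDegree k) (u : V) (s : Finset V)
    (hs : s.card < k) : ∃ v, G.Adj u v ∧ v ∉ s := by
  obtain ⟨v, hv, hvs⟩ := Finset.exists_mem_notMem_of_card_lt_card
    (s := s) (t := G.neighborFinset u) (by rwa [card_neighborFinset_eq_degree, hG u])
  exact ⟨v, (mem_neighborFinset _ _ _).mp hv, hvs⟩

lemma IsRegularOfDegree.le_card_edgeSet [Nonempty V] (hG : G.IsRegularOfDegree k) :
    k ≤ Nat.card G.edgeSet := by
  obtain ⟨u⟩ := ‹Nonempty V›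
  calc k = Nat.card (G.incidenceSet u) := by
        rw [Nat.card_eq_fintype_card, card_incidenceSet_eq_degree, hG u]
    _ ≤ Nat.card G.edgeSet := Nat.card_mono (Set.toFinite _) (G.incidenceSet_subset u)

end Regular

section StronglyRegular

variable {G : SimpleGraph V} [Fintype V] [DecidableRel G.Adj] {n k l m : ℕ}

theorem IsSRGWith.even_mul [Nonempty V] (hG : G.IsSRGWith n k l m) : Even (k * l) := by
  obtain ⟨u⟩ := ‹Nonempty V›
  set H := G.induce (G.neighborSet u)
  have hdeg : ∀ v, H.degree v = l := fun v => by
    rw [← card_neighborSet_eq_degree, ← hG.of_adj u v v.2]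
    exact Fintype.card_congr
      { toFun := fun w => ⟨w.1.1, w.1.2, w.2⟩
        invFun := fun w => ⟨⟨w.1, w.2.1⟩, w.2.2⟩
        left_inv := fun _ => rfl
        right_inv := fun _ => rfl }
  have hsum := H.sum_degrees_eq_twice_card_edges
  simp only [hdeg, Finset.sum_const, Finset.card_univ, smul_eq_mul] at hsum
  rw [card_neighborSet_eq_degree, hG.regular u] at hsum
  exact ⟨H.edgeFinset.card, by omega⟩

lemma IsSRGWith.eq_of_adj_of_adj (hG : G.IsSRGWith n k l m) (hl : l ≤ 1) {u v w₁ w₂ : V}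
    (huv : G.Adj u v) (hu₁ : G.Adj u w₁) (hv₁ : G.Adj v w₁) (hu₂ : G.Adj u w₂)
    (hv₂ : G.Adj v w₂) : w₁ = w₂ :=
  congrArg Subtype.val <| Fintype.card_le_one_iff.mp (hG.of_adj u v huv ▸ hl)
    ⟨w₁, hu₁, hv₁⟩ ⟨w₂, hu₂, hv₂⟩

lemma IsSRGWith.not_adj_of_adj_of_adj (hG : G.IsSRGWith n k 0 m) {u v w : V}
    (huv : G.Adj u v) (huw : G.Adj u w) : ¬G.Adj v w := fun hvw =>
  (Fintype.card_eq_zero_iff.mp (hG.of_adj u v huv)).elim ⟨w, huw, hvw⟩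

lemma IsSRGWith.one_le_of_adj_of_adj (hG : G.IsSRGWith n k l m) {u v w : V}
    (huv : G.Adj u v) (huw : G.Adj u w) (hvw : G.Adj v w) : 1 ≤ l :=
  hG.of_adj u v huv ▸ Fintype.card_pos_iff.mpr ⟨⟨w, huw, hvw⟩⟩

lemma IsSRGWith.one_le_of_not_adj (hG : G.IsSRGWith n k l m) {u v w : V} (huv : u ≠ v)
    (hnuv : ¬G.Adj u v) (huw : G.Adj u w) (hvw : G.Adj v w) : 1 ≤ m :=
  hG.of_not_adj huv hnuv ▸ Fintype.card_pos_iff.mpr ⟨⟨w, huw, hvw⟩⟩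

lemma IsSRGWith.exists_adj_adj_of_adj (hG : G.IsSRGWith n k l m) (hl : 1 ≤ l) {u v : V}
    (huv : G.Adj u v) : ∃ w, G.Adj u w ∧ G.Adj v w := by
  obtain ⟨⟨w, huw, hvw⟩⟩ := Fintype.card_pos_iff.mp (hG.of_adj u v huv ▸ hl)
  exact ⟨w, huw, hvw⟩

lemma IsSRGWith.exists_adj_adj_of_not_adj (hG : G.IsSRGWith n k l m) (hm : 1 ≤ m) {u v : V}
    (huv : u ≠ v) (hnuv : ¬G.Adj u v) : ∃ w, G.Adj u w ∧ G.Adj v w := by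
  obtain ⟨⟨w, huw, hvw⟩⟩ := Fintype.card_pos_iff.mp (hG.of_not_adj huv hnuv ▸ hm)
  exact ⟨w, huw, hvw⟩

theorem IsSRGWith.reachable_deleteEdges (hG : G.IsSRGWith n k l m) (hl : l ≤ 1) (hk : 2 ≤ k)
    {p q : V} (hpq : G.Adj p q) : (G.deleteEdges {s(p, q)}).Reachable p q := by
  rw [reachable_deleteEdges_iff_exists_walk]
  rcases Nat.le_one_iff_eq_zero_or_eq_one.mp hl with rfl | rfl
  · obtain ⟨v, hpv, hvq⟩ := IsRegularOfDegree.exists_adj_notMem hG.regular p {q}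
      ((Finset.card_singleton q).trans_lt (by omega))
    obtain ⟨w, hvw, hwp⟩ := IsRegularOfDegree.exists_adj_notMem hG.regular v {p}
      ((Finset.card_singleton p).trans_lt (by omega))
    simp only [Finset.mem_singleton] at hvq hwp
    have hnvq : ¬G.Adj v q := hG.not_adj_of_adj_of_adj hpv hpq
    have hnpw : ¬G.Adj p w := hG.not_adj_of_adj_of_adj hpv.symm hvw
    have hwq : w ≠ q := by rintro rfl; exact hnvq hvw
    by_cases hadj : G.Adj w q
    · refine ⟨.cons hpv (.cons hvw (.cons hadj .nil)), ?_⟩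
      grind [Walk.edges_cons, Walk.edges_nil, Sym2.eq_iff, hpv.ne, hpq.ne, hvw.ne]
    · have hm : 1 ≤ m := hG.one_le_of_not_adj (Ne.symm hwp) hnpw hpv hvw.symm
      obtain ⟨z, hwz, hqz⟩ := hG.exists_adj_adj_of_not_adj hm hwq hadj
      have hzp : z ≠ p := by rintro rfl; exact hnpw hwz.symm
      refine ⟨.cons hpv (.cons hvw (.cons hwz (.cons hqz.symm .nil))), ?_⟩
      grind [Walk.edges_cons, Walk.edges_nil, Sym2.eq_iff, hpv.ne, hpq.ne, hvw.ne, hqz.ne]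
  · obtain ⟨w, hpw, hqw⟩ := hG.exists_adj_adj_of_adj le_rfl hpq
    refine ⟨.cons hpw (.cons hqw.symm .nil), ?_⟩
    grind [Walk.edges_cons, Walk.edges_nil, Sym2.eq_iff, hpw.ne, hqw.ne, hpq.ne]

theorem IsSRGWith.connected_deleteEdges (hG : G.IsSRGWith n k l m) (hconn : G.Connected)
    (hl : l ≤ 1) (hk : 2 ≤ k) {e : Sym2 V} (he : e ∈ G.edgeSet) :
    (G.deleteEdges {e}).Connected := by
  induction e with
  | h p q =>
    exact hconn.connected_delete_edge_of_not_isBridge fun hbr =>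
      hbr (hG.reachable_deleteEdges hl hk he)

lemma IsSRGWith.exists_adj_not_adj_of_adj (hG : G.IsSRGWith n k 1 m) (hk : 3 ≤ k)
    {u a b : V} (hua : G.Adj u a) (hub : G.Adj u b) (hab : G.Adj a b) (x : Sym2 V) :
    ∃ c, G.Adj u c ∧ s(u, c) ≠ x ∧ a ≠ c ∧ ¬G.Adj a c ∧ b ≠ c ∧ ¬G.Adj b c := by
  have : Nonempty V := ⟨u⟩
  have hk4 : 4 ≤ k := by
    obtain ⟨r, hr⟩ := hG.even_mul
    omega
  obtain ⟨c₁, huc₁, hc₁⟩ := IsRegularOfDegree.exists_adj_notMem hG.regular u {a, b}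
    (Finset.card_le_two.trans_lt (by omega))
  obtain ⟨c₂, huc₂, hc₂⟩ := IsRegularOfDegree.exists_adj_notMem hG.regular u {a, b, c₁}
    (Finset.card_le_three.trans_lt (by omega))
  simp only [Finset.mem_insert, Finset.mem_singleton, not_or] at hc₁ hc₂
  obtain ⟨c, huc, hcx, hca, hcb⟩ :
      ∃ c, G.Adj u c ∧ s(u, c) ≠ x ∧ c ≠ a ∧ c ≠ b := by
    by_cases hx : s(u, c₁) = x
    · exact ⟨c₂, huc₂, fun h => hc₂.2.2 (Sym2.congr_right.mp (h.trans hx.symm)),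
        hc₂.1, hc₂.2.1⟩
    · exact ⟨c₁, huc₁, hx, hc₁⟩
  exact ⟨c, huc, hcx, hca.symm, fun hac => hcb (hG.eq_of_adj_of_adj le_rfl hua huc hac hub hab),
    hcb.symm, fun hbc => hca (hG.eq_of_adj_of_adj le_rfl hub huc hbc hua hab.symm)⟩

end StronglyRegular

end SimpleGraph

namespace GallaiSRG

open SimpleGraph

variable {V : Type*}

section Gallai

variable {G : SimpleGraph V}

lemma exists_adj_eq_mk_of_mem {e : Sym2 V} (he : e ∈ G.edgeSet) {u : V} (hu : u ∈ e) :
    ∃ a, G.Adj u a ∧ e = s(u, a) :=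
  ⟨Sym2.Mem.other hu, by rwa [← mem_edgeSet, Sym2.other_spec hu], (Sym2.other_spec hu).symm⟩

lemma adj_of_spansTriangle {u a b : V} (hua : G.Adj u a) (hub : G.Adj u b) (hab : a ≠ b)
    (h : SpansTriangle G s(u, a) s(u, b)) : G.Adj a b := by
  obtain ⟨x, y, z, he, hf, hyz⟩ := h
  rw [Sym2.eq_iff] at he hf
  rcases he with ⟨rfl, rfl⟩ | ⟨rfl, rfl⟩ <;> rcases hf with ⟨h, rfl⟩ | ⟨rfl, rfl⟩
  · exact hyz
  · exact absurd rfl hub.ne'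
  · exact absurd h.symm hua.ne'
  · exact absurd rfl hab

lemma gallai_adj_of_not_adj {e f : G.edgeSet} {u a b : V}
    (he : (e : Sym2 V) = s(u, a)) (hf : (f : Sym2 V) = s(u, b))
    (hua : G.Adj u a) (hub : G.Adj u b) (hab : a ≠ b) (hnab : ¬G.Adj a b) :
    (gallai G).Adj e f := by
  show Incident (e : Sym2 V) f ∧ ¬SpansTriangle G e f
  rw [he, hf]
  exact ⟨⟨fun h => hab (Sym2.congr_right.mp h), u, Sym2.mem_mk_left u a,
    Sym2.mem_mk_left u b⟩, fun h => hnab (adj_of_spansTriangle hua hub hab h)⟩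

end Gallai

section Reachability

variable {G : SimpleGraph V} [Fintype V] [DecidableRel G.Adj] {n k l m : ℕ}

lemma reachable_gallai_of_mem_of_mem (hG : G.IsSRGWith n k l m) (hl : l ≤ 1) (hk : 3 ≤ k)
    {x : G.edgeSet} (e f : ({x}ᶜ : Set G.edgeSet)) {u : V} (hue : u ∈ e.1.1)
    (huf : u ∈ f.1.1) :
    ((gallai G).induce {x}ᶜ).Reachable e f := by
  obtain ⟨a, hua, hea⟩ := exists_adj_eq_mk_of_mem e.1.2 hue
  obtain ⟨b, hub, hfb⟩ := exists_adj_eq_mk_of_mem f.1.2 huf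
  obtain rfl | hab := eq_or_ne a b
  · rw [Subtype.ext (Subtype.ext (hea.trans hfb.symm))]
  by_cases hadj : G.Adj a b
  · obtain rfl : l = 1 := le_antisymm hl (hG.one_le_of_adj_of_adj hua hub hadj)
    obtain ⟨c, huc, hcx, hac, hnac, hbc, hnbc⟩ :=
      hG.exists_adj_not_adj_of_adj hk hua hub hadj x
    let g : ({x}ᶜ : Set G.edgeSet) :=
      ⟨⟨s(u, c), huc⟩, fun h => hcx (congrArg Subtype.val h)⟩
    have heg : ((gallai G).induce {x}ᶜ).Adj e g :=
      gallai_adj_of_not_adj hea rfl hua huc hac hnac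
    have hgf : ((gallai G).induce {x}ᶜ).Adj g f :=
      gallai_adj_of_not_adj rfl hfb huc hub hbc.symm fun h => hnbc h.symm
    exact heg.reachable.trans hgf.reachable
  · exact Adj.reachable (G := (gallai G).induce {x}ᶜ)
      (gallai_adj_of_not_adj hea hfb hua hub hab hadj)

lemma reachable_gallai_of_walk (hG : G.IsSRGWith n k l m) (hl : l ≤ 1) (hk : 3 ≤ k)
    {x : G.edgeSet} {a b : V} (w : (G.deleteEdges {x.1}).Walk a b)
    (e f : ({x}ᶜ : Set G.edgeSet)) (hae : a ∈ e.1.1) (hbf : b ∈ f.1.1) :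
    ((gallai G).induce {x}ᶜ).Reachable e f := by
  induction w generalizing e with
  | nil => exact reachable_gallai_of_mem_of_mem hG hl hk e f hae hbf
  | @cons u v _ h w ih =>
    rw [deleteEdges_adj] at h
    let g : ({x}ᶜ : Set G.edgeSet) :=
      ⟨⟨s(u, v), h.1⟩, fun hg => h.2 (congrArg Subtype.val hg)⟩
    exact (reachable_gallai_of_mem_of_mem hG hl hk e g hae (Sym2.mem_mk_left u v)).trans
      (ih g (Sym2.mem_mk_right u v) hbf)

end Reachability

theorem gallai_two_connected_general {V : Type*} [Fintype V] (G : SimpleGraph V)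
    [DecidableRel G.Adj] {n k l m : ℕ} (hG : G.IsSRGWith n k l m) (hconn : G.Connected)
    (hl : l = 0 ∨ l = 1) (hk : 3 ≤ k) :
    3 ≤ Nat.card G.edgeSet ∧
      ∀ x : G.edgeSet, ((gallai G).induce ({x}ᶜ : Set G.edgeSet)).Connected := by
  have hl₁ : l ≤ 1 := by omega
  have := hconn.nonempty
  have hcard : 3 ≤ Nat.card G.edgeSet :=
    hk.trans (IsRegularOfDegree.le_card_edgeSet hG.regular)
  refine ⟨hcard, fun x => ?_⟩
  have : Nontrivial G.edgeSet := Finite.one_lt_card_iff_nontrivial.mp (by omega)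
  obtain ⟨y, hyx⟩ := exists_ne x
  have : Nonempty ({x}ᶜ : Set G.edgeSet) := ⟨⟨y, hyx⟩⟩
  refine ⟨fun e f => ?_⟩
  obtain ⟨w⟩ := (hG.connected_deleteEdges hconn hl₁ (by omega) x.2).preconnected
    e.1.1.out.1 f.1.1.out.1
  exact reachable_gallai_of_walk hG hl₁ hk w e f (Sym2.out_fst_mem _) (Sym2.out_fst_mem _)

/-- For a connected SRG with `λ ∈ {0, 1}` and `k ≥ 3`, the Gallai graph is 2-connected:
it has at least 3 vertices and deleting any vertex leaves it connected. -/
theorem gallai_two_connected {V : Type*} [Fintype V] (G : SimpleGraph V)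
    [DecidableRel G.Adj] {n k l m : ℕ} (hG : G.IsSRGWith n k l m) (hconn : G.Connected)
    (hnc : G ≠ ⊤) (hne : G ≠ ⊥) (hl : l = 0 ∨ l = 1) (hk : 3 ≤ k) :
    3 ≤ Nat.card G.edgeSet ∧
      ∀ x : G.edgeSet, ((gallai G).induce ({x}ᶜ : Set G.edgeSet)).Connected :=
  gallai_two_connected_general G hG hconn hl hk

end GallaiSRG
end

section
/- Let G be a connected strongly regular graph with parameters (n, k, 2, μ) in which the closed neighbourhood of each vertex induces a wheel (i.e., the neighbourhood of each vertex induces a single cycle). Then the anti-Gallai graph Δ(G) is connected and edge-regular with parameters (nk/2, 4, 1). -/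
open scoped Classical

/-!
Every edge `uv` lies on exactly two triangles `uvw`, `uvx`, so its neighbours in `Δ(G)` are `uw`,
`ux`, `vw`, `vx`. When every edge lies on exactly `l` triangles and every local graph `G[N(v)]` is
connected, an `(l + 2)`-clique `s` is closed under adjacency: for `a ≠ c` in `s` the common
neighbours of `a` and `c` are exactly the other `l` vertices of `s`, so `s \ {a}` is closed in the
connected graph `G[N(a)]`. Hence `G ≠ K₄` is `K₄`-free, and two edges `pq`, `pr` of a triangle have
the third edge `qr` as their only common neighbour in `Δ(G)`. For connectivity, the edges through
`v` are joined in `Δ(G)` along paths of `G[N(v)]`, and walks in `G` chain these stars together.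
-/

namespace SimpleGraph

variable {V : Type*} {G : SimpleGraph V}

lemma Preconnected.mem_of_adj_closed {H : SimpleGraph V} (hH : H.Preconnected) {S : Set V}
    (hS : ∀ a b, H.Adj a b → a ∈ S → b ∈ S) {a : V} (ha : a ∈ S) (b : V) : b ∈ S := by
  obtain ⟨p⟩ := hH a b
  induction p with
  | nil => exact ha
  | cons h _ ih => exact ih (hS _ _ h ha)

lemma IsRegularOfDegree.two_mul_card_edgeFinset [Fintype V] [DecidableRel G.Adj] {d : ℕ}
    (h : G.IsRegularOfDegree d) : 2 * G.edgeFinset.card = Fintype.card V * d := by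
  rw [← sum_degrees_eq_twice_card_edges, Finset.sum_congr rfl fun v _ => h v, Finset.sum_const,
    Finset.card_univ, smul_eq_mul]

section CommonNeighbors

variable [Finite V] {l : ℕ} {s : Finset V}

lemma IsNClique.commonNeighbors_eq
    (hcn : ∀ u v, G.Adj u v → (G.commonNeighbors u v).ncard = l) (hs : G.IsNClique (l + 2) s)
    {a c : V} (ha : a ∈ s) (hc : c ∈ s) (hac : a ≠ c) :
    G.commonNeighbors a c = ↑((s.erase a).erase c) := by
  refine (Set.eq_of_subset_of_ncard_le ?_ ?_ (Set.toFinite _)).symm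
  · intro y hy
    simp only [Finset.coe_erase, Set.mem_sdiff, Finset.mem_coe, Set.mem_singleton_iff] at hy
    exact (G.mem_commonNeighbors).2
      ⟨hs.1 ha hy.1.1 (Ne.symm hy.1.2), hs.1 hc hy.1.1 (Ne.symm hy.2)⟩
  · rw [hcn a c (hs.1 ha hc hac), Set.ncard_coe_finset,
      Finset.card_erase_of_mem (Finset.mem_erase.2 ⟨hac.symm, hc⟩), Finset.card_erase_of_mem ha,
      hs.2]
    omega

lemma IsNClique.mem_of_adj
    (hcn : ∀ u v, G.Adj u v → (G.commonNeighbors u v).ncard = l)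
    (hloc : ∀ v, (G.induce (G.neighborSet v)).Preconnected) (hs : G.IsNClique (l + 2) s)
    {a b : V} (ha : a ∈ s) (hab : G.Adj a b) : b ∈ s := by
  obtain ⟨c, hc⟩ : (s.erase a).Nonempty := by
    rw [← Finset.card_pos, Finset.card_erase_of_mem ha, hs.2]
    omega
  obtain ⟨hca, hcs⟩ := Finset.mem_erase.1 hc
  refine Preconnected.mem_of_adj_closed (hloc a) (S := {y | (y : V) ∈ s}) ?_
    (a := ⟨c, hs.1 ha hcs hca.symm⟩) hcs ⟨b, hab⟩
  rintro ⟨y, hy⟩ ⟨z, hz⟩ hyz (hys : y ∈ s)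
  have hz' : z ∈ G.commonNeighbors a y := (G.mem_commonNeighbors).2 ⟨hz, hyz⟩
  rw [hs.commonNeighbors_eq hcn ha hys (G.ne_of_adj hy)] at hz'
  exact Finset.mem_of_mem_erase (Finset.mem_of_mem_erase hz')

lemma eq_top_of_isNClique
    (hcn : ∀ u v, G.Adj u v → (G.commonNeighbors u v).ncard = l)
    (hloc : ∀ v, (G.induce (G.neighborSet v)).Preconnected) (hconn : G.Preconnected)
    (hs : G.IsNClique (l + 2) s) : G = ⊤ := by
  obtain ⟨a, ha⟩ : s.Nonempty := by
    rw [← Finset.card_pos, hs.2]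
    omega
  have hall : ∀ b, b ∈ s :=
    Preconnected.mem_of_adj_closed hconn (S := {b | b ∈ s})
      (fun _ _ hab hb => hs.mem_of_adj hcn hloc hb hab) ha
  ext b c
  rw [top_adj]
  exact ⟨G.ne_of_adj, hs.1 (hall b) (hall c)⟩

lemma cliqueFree_of_ne_top
    (hcn : ∀ u v, G.Adj u v → (G.commonNeighbors u v).ncard = l)
    (hloc : ∀ v, (G.induce (G.neighborSet v)).Preconnected) (hconn : G.Preconnected)
    (htop : G ≠ ⊤) : G.CliqueFree (l + 2) :=
  fun _ hs => htop (eq_top_of_isNClique hcn hloc hconn hs)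

end CommonNeighbors

end SimpleGraph

namespace GallaiSRG

open SimpleGraph

variable {V : Type*} {G : SimpleGraph V}

lemma antiGallai_adj_mk_iff {u v : V} (huv : G.Adj u v) (f : G.edgeSet) :
    (antiGallai G).Adj ⟨s(u, v), huv⟩ f ↔
      ∃ c ∈ G.commonNeighbors u v, (f : Sym2 V) = s(u, c) ∨ (f : Sym2 V) = s(v, c) := by
  constructor
  · rintro ⟨-, a, b, c, he, hf, hbc⟩
    have hac : G.Adj a c := G.mem_edgeSet.1 (hf ▸ f.2)
    rcases Sym2.eq_iff.1 he with ⟨rfl, rfl⟩ | ⟨rfl, rfl⟩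
    · exact ⟨c, (G.mem_commonNeighbors).2 ⟨hac, hbc⟩, Or.inl hf⟩
    · exact ⟨c, (G.mem_commonNeighbors).2 ⟨hbc, hac⟩, Or.inr hf⟩
  · rintro ⟨c, hc, hf | hf⟩ <;> obtain ⟨huc, hvc⟩ := (G.mem_commonNeighbors).1 hc
    · refine ⟨fun h => ?_, u, v, c, rfl, hf, hvc⟩
      rcases Sym2.eq_iff.1 (h.trans hf) with ⟨-, rfl⟩ | ⟨rfl, -⟩
      exacts [hvc.ne rfl, huc.ne rfl]
    · refine ⟨fun h => ?_, v, u, c, Sym2.eq_swap, hf, huc⟩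
      rcases Sym2.eq_iff.1 (h.trans hf) with ⟨rfl, -⟩ | ⟨rfl, -⟩
      exacts [huv.ne rfl, huc.ne rfl]

lemma antiGallai_neighborSet_mk {u v : V} (huv : G.Adj u v) :
    (antiGallai G).neighborSet ⟨s(u, v), huv⟩ =
      Set.range (Sum.elim (fun c : G.commonNeighbors u v => (⟨s(u, c), c.2.1⟩ : G.edgeSet))
        (fun c : G.commonNeighbors u v => (⟨s(v, c), c.2.2⟩ : G.edgeSet))) := by
  ext f
  simp only [mem_neighborSet, antiGallai_adj_mk_iff huv, Set.mem_range, Sum.exists,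
    Sum.elim_inl, Sum.elim_inr, Subtype.exists, Subtype.ext_iff]
  constructor
  · rintro ⟨c, hc, hf | hf⟩
    exacts [Or.inl ⟨c, hc, hf.symm⟩, Or.inr ⟨c, hc, hf.symm⟩]
  · rintro (⟨c, hc, hf⟩ | ⟨c, hc, hf⟩)
    exacts [⟨c, hc, Or.inl hf.symm⟩, ⟨c, hc, Or.inr hf.symm⟩]

lemma ncard_neighborSet_antiGallai [Finite V] {l : ℕ}
    (hcn : ∀ u v, G.Adj u v → (G.commonNeighbors u v).ncard = l) (e : G.edgeSet) :
    ((antiGallai G).neighborSet e).ncard = 2 * l := by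
  obtain ⟨⟨u, v⟩, huv⟩ := e
  rw [antiGallai_neighborSet_mk huv, Set.ncard_range_of_injective, Nat.card_sum,
    Nat.card_coe_set_eq, hcn u v huv, two_mul]
  rintro (⟨c, hc⟩ | ⟨c, hc⟩) (⟨d, hd⟩ | ⟨d, hd⟩) h <;>
    obtain ⟨huc, hvc⟩ := (G.mem_commonNeighbors).1 hc <;>
    obtain ⟨hud, hvd⟩ := (G.mem_commonNeighbors).1 hd <;>
    simp only [Sum.elim_inl, Sum.elim_inr, Subtype.ext_iff, Sym2.eq_iff, Sum.inl.injEq,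
      Sum.inr.injEq, reduceCtorEq] at h ⊢ <;>
    aesop

lemma antiGallai_neighborSet_inter_eq (hK4 : G.CliqueFree 4) {p q r : V} (hpq : G.Adj p q)
    (hpr : G.Adj p r) (hqr : G.Adj q r) :
    (antiGallai G).neighborSet ⟨s(p, q), hpq⟩ ∩ (antiGallai G).neighborSet ⟨s(p, r), hpr⟩ =
      {⟨s(q, r), hqr⟩} := by
  have no_apex : ∀ c, G.Adj p c → G.Adj q c → G.Adj r c → False := fun c hpc hqc hrc =>
    hK4 _ <| (is3Clique_triple_iff.2 ⟨hpq, hpr, hqr⟩).insert <| by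
      simp only [Finset.mem_insert, Finset.mem_singleton, forall_eq_or_imp, forall_eq]
      exact ⟨hpc.symm, hqc.symm, hrc.symm⟩
  ext f
  simp only [Set.mem_inter_iff, mem_neighborSet, antiGallai_adj_mk_iff, Set.mem_singleton_iff,
    Subtype.ext_iff]
  constructor
  · rintro ⟨⟨c, hc, hf | hf⟩, ⟨d, hd, hf' | hf'⟩⟩ <;> rw [G.mem_commonNeighbors] at hc hd <;>
      rw [hf, Sym2.eq_iff] at hf'
    · rcases hf' with ⟨-, rfl⟩ | ⟨rfl, rfl⟩
      exacts [(no_apex c hc.1 hc.2 hd.2).elim, (hc.1.ne rfl).elim]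
    · rcases hf' with ⟨rfl, -⟩ | ⟨rfl, rfl⟩
      exacts [(hpr.ne rfl).elim, (hd.1.ne rfl).elim]
    · rcases hf' with ⟨rfl, -⟩ | ⟨rfl, rfl⟩
      exacts [(hpq.ne rfl).elim, (hc.1.ne rfl).elim]
    · rcases hf' with ⟨rfl, -⟩ | ⟨rfl, rfl⟩
      exacts [(hqr.ne rfl).elim, hf]
  · intro hf
    exact ⟨⟨r, (G.mem_commonNeighbors).2 ⟨hpr, hqr⟩, Or.inr hf⟩,
      ⟨q, (G.mem_commonNeighbors).2 ⟨hpq, hqr.symm⟩, Or.inr (hf.trans Sym2.eq_swap)⟩⟩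

lemma ncard_inter_neighborSet_antiGallai (hK4 : G.CliqueFree 4) {x y : G.edgeSet}
    (hxy : (antiGallai G).Adj x y) :
    ((antiGallai G).neighborSet x ∩ (antiGallai G).neighborSet y).ncard = 1 := by
  obtain ⟨x, hx⟩ := x
  obtain ⟨y, hy⟩ := y
  obtain ⟨-, p, q, r, rfl, rfl, hqr⟩ := hxy
  rw [antiGallai_neighborSet_inter_eq hK4 hx hy hqr, Set.ncard_singleton]

def starHom (v : V) : G.induce (G.neighborSet v) →g antiGallai G where
  toFun w := ⟨s(v, w), w.2⟩
  map_rel' {w w'} h := by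
    refine ⟨fun h' => ?_, v, w, w', rfl, rfl, h⟩
    rcases Sym2.eq_iff.1 h' with ⟨-, h'⟩ | ⟨h', -⟩
    exacts [h.ne (Subtype.ext h'), w'.2.ne h']

lemma antiGallai_reachable_of_mem_of_mem {v : V}
    (hloc : (G.induce (G.neighborSet v)).Preconnected) {e f : G.edgeSet}
    (he : v ∈ (e : Sym2 V)) (hf : v ∈ (f : Sym2 V)) : (antiGallai G).Reachable e f := by
  have exists_starHom_eq : ∀ e : G.edgeSet, v ∈ (e : Sym2 V) → ∃ w, starHom v w = e := by
    rintro ⟨e, he'⟩ he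
    obtain ⟨w, rfl⟩ := Sym2.mem_iff_exists.1 he
    exact ⟨⟨w, he'⟩, rfl⟩
  obtain ⟨a, rfl⟩ := exists_starHom_eq e he
  obtain ⟨b, rfl⟩ := exists_starHom_eq f hf
  exact (hloc a b).map (starHom v)

lemma antiGallai_reachable_of_reachable
    (hloc : ∀ v, (G.induce (G.neighborSet v)).Preconnected) {x a : V} (h : G.Reachable x a)
    {e f : G.edgeSet} (he : x ∈ (e : Sym2 V)) (hf : a ∈ (f : Sym2 V)) :
    (antiGallai G).Reachable e f := by
  obtain ⟨p⟩ := h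
  induction p generalizing e with
  | nil => exact antiGallai_reachable_of_mem_of_mem (hloc _) he hf
  | cons h _ ih =>
    have hstar :=
      antiGallai_reachable_of_mem_of_mem (hloc _) he (f := ⟨_, h⟩) (Sym2.mem_mk_left _ _)
    exact hstar.trans (ih (Sym2.mem_mk_right _ _) hf)

lemma antiGallai_preconnected (hloc : ∀ v, (G.induce (G.neighborSet v)).Preconnected)
    (hconn : G.Preconnected) : (antiGallai G).Preconnected := fun e f =>
  antiGallai_reachable_of_reachable hloc (hconn _ _) (Sym2.out_fst_mem e.1) (Sym2.out_fst_mem f.1)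

/-- For a connected SRG with `λ = 2` in which the neighbourhood of each vertex induces a
single cycle (each closed neighbourhood is a wheel), the anti-Gallai graph is connected
and edge-regular with parameters `(nk/2, 4, 1)`. -/
theorem antiGallai_of_lambda_two {V : Type*} [Fintype V] (G : SimpleGraph V)
    [DecidableRel G.Adj] {n k m : ℕ} (hG : G.IsSRGWith n k 2 m) (hconn : G.Connected)
    (hnc : G ≠ ⊤) (hne : G ≠ ⊥)
    (hwheel : ∀ v : V, Nonempty (G.induce (G.neighborSet v) ≃g cycleGraph k)) :
    (antiGallai G).Connected ∧ IsEdgeRegularN (antiGallai G) (n * k / 2) 4 1 := by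
  have hcn : ∀ u v, G.Adj u v → (G.commonNeighbors u v).ncard = 2 := fun u v huv => by
    rw [← Nat.card_coe_set_eq, Nat.card_eq_fintype_card, hG.of_adj u v huv]
  have hloc : ∀ v, (G.induce (G.neighborSet v)).Preconnected := fun v =>
    (hwheel v).some.preconnected_iff.2 cycleGraph_preconnected
  have hK4 : G.CliqueFree 4 := cliqueFree_of_ne_top hcn hloc hconn.preconnected hnc
  refine ⟨(connected_iff _).2 ⟨antiGallai_preconnected hloc hconn.preconnected,
    (edgeSet_nonempty.2 hne).to_subtype⟩, ?_, ncard_neighborSet_antiGallai hcn,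
    fun _ _ => ncard_inter_neighborSet_antiGallai hK4⟩
  rw [Nat.card_eq_fintype_card, ← G.edgeFinset_card, ← hG.card,
    ← IsRegularOfDegree.two_mul_card_edgeFinset hG.regular]
  omega

end GallaiSRG
end

section
/- If G = H ∨ K₁ is the join of a triangle-free graph H with a single vertex, then the anti-Gallai graph Δ(G) is isomorphic to the semi-total point graph R(H). -/
open scoped Classical

namespace GallaiSRG

open SimpleGraph

variable {V : Type*}

/-! Every edge of `H ∨ K₁` is either a spoke `s(none, some v)` or the image of an edge of `H`,
which identifies the vertex set of `Δ(H ∨ K₁)` with `V ⊕ E(H)`, the vertex set of `R(H)`. Two spokes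
span a triangle iff their ends are adjacent in `H`, a spoke and an edge of `H` iff the spoke ends on
that edge, and two edges of `H` never do, because such a triangle would lie in `H`. -/

lemma spansTriangle_mk_mk_iff {G : SimpleGraph V} {a b c d : V} :
    SpansTriangle G s(a, b) s(c, d) ↔
      (a = c ∧ G.Adj b d) ∨ (a = d ∧ G.Adj b c) ∨ (b = c ∧ G.Adj a d) ∨ (b = d ∧ G.Adj a c) := by
  constructor
  · rintro ⟨u, v, w, he, hf, hvw⟩
    rw [Sym2.eq_iff] at he hf
    rcases he with ⟨rfl, rfl⟩ | ⟨rfl, rfl⟩ <;> rcases hf with ⟨rfl, rfl⟩ | ⟨rfl, rfl⟩ <;> simp [hvw]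
  · rintro (⟨rfl, h⟩ | ⟨rfl, h⟩ | ⟨rfl, h⟩ | ⟨rfl, h⟩)
    · exact ⟨a, b, d, rfl, rfl, h⟩
    · exact ⟨a, b, c, rfl, Sym2.eq_swap, h⟩
    · exact ⟨b, a, d, Sym2.eq_swap, rfl, h⟩
    · exact ⟨b, a, c, Sym2.eq_swap, Sym2.eq_swap, h⟩

lemma SpansTriangle.not_cliqueFree_three {G : SimpleGraph V} {e f : Sym2 V}
    (h : SpansTriangle G e f) (he : e ∈ G.edgeSet) (hf : f ∈ G.edgeSet) : ¬ G.CliqueFree 3 := by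
  obtain ⟨u, v, w, rfl, rfl, hvw⟩ := h
  exact fun hG => hG {u, v, w} (is3Clique_triple_iff.mpr ⟨he, hf, hvw⟩)

section JoinOne

variable {H : SimpleGraph V}

@[simp]
lemma joinOne_adj_none_some (v : V) : (joinOne H).Adj none (some v) := by
  simp [joinOne]

@[simp]
lemma joinOne_adj_some_some {v w : V} : (joinOne H).Adj (some v) (some w) ↔ H.Adj v w := by
  simpa [joinOne, H.adj_comm w v] using Adj.ne

lemma none_notMem_map_some (e : Sym2 V) : none ∉ e.map some := by
  simp [Sym2.mem_map]

lemma spoke_ne_map_some (v : V) (e : Sym2 V) : s(none, some v) ≠ e.map some :=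
  fun h => none_notMem_map_some e (h ▸ Sym2.mem_mk_left none (some v))

lemma map_some_mem_edgeSet_joinOne {e : Sym2 V} (he : e ∈ H.edgeSet) :
    e.map some ∈ (joinOne H).edgeSet := by
  induction e using Sym2.ind with
  | _ v w => simpa using he

end JoinOne

section SemiTotal

variable {H : SimpleGraph V}

@[simp]
lemma semiTotal_adj_inl_inl {v w : V} :
    (semiTotal H).Adj (.inl v) (.inl w) ↔ H.Adj v w := by
  simpa [semiTotal, H.adj_comm w v] using Adj.ne

@[simp]
lemma semiTotal_adj_inl_inr {v : V} {e : H.edgeSet} :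
    (semiTotal H).Adj (.inl v) (.inr e) ↔ v ∈ (e : Sym2 V) := by
  simp [semiTotal]

@[simp]
lemma semiTotal_not_adj_inr_inr {e f : H.edgeSet} : ¬ (semiTotal H).Adj (.inr e) (.inr f) := by
  simp [semiTotal]

end SemiTotal

section Spans

variable {H : SimpleGraph V}

lemma spansTriangle_joinOne_map_some {e f : Sym2 V} :
    SpansTriangle (joinOne H) (e.map some) (f.map some) ↔ SpansTriangle H e f := by
  induction e using Sym2.ind with
  | _ a b =>
    induction f using Sym2.ind with
    | _ c d => simp [spansTriangle_mk_mk_iff]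

lemma spansTriangle_joinOne_spoke_spoke {v w : V} :
    SpansTriangle (joinOne H) s(none, some v) s(none, some w) ↔ H.Adj v w := by
  simp [spansTriangle_mk_mk_iff]

lemma spansTriangle_joinOne_spoke_map_some {v : V} {e : Sym2 V} :
    SpansTriangle (joinOne H) s(none, some v) (e.map some) ↔ v ∈ e := by
  induction e using Sym2.ind with
  | _ a b => simp [spansTriangle_mk_mk_iff]

end Spans

section EdgeEquiv

variable (H : SimpleGraph V)

def sumToEdge : V ⊕ H.edgeSet → (joinOne H).edgeSet
  | .inl v => ⟨s(none, some v), joinOne_adj_none_some v⟩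
  | .inr e => ⟨e.1.map some, map_some_mem_edgeSet_joinOne e.2⟩

lemma sumToEdge_bijective : (sumToEdge H).Bijective := by
  refine ⟨?_, ?_⟩
  · rintro (v | ⟨e, he⟩) (w | ⟨f, hf⟩) h <;>
      replace h := congrArg Subtype.val h <;> dsimp only [sumToEdge] at h
    · simpa using h
    · exact absurd h (spoke_ne_map_some v f)
    · exact absurd h.symm (spoke_ne_map_some w e)
    · simpa using Sym2.map.injective (Option.some_injective V) h
  · rintro ⟨e, he⟩
    induction e using Sym2.ind with
    | _ a b =>
      rcases a with _ | a <;> rcases b with _ | b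
      · exact absurd he ((joinOne H).loopless.irrefl none)
      · exact ⟨.inl b, rfl⟩
      · exact ⟨.inl a, Subtype.ext Sym2.eq_swap⟩
      · exact ⟨.inr ⟨s(a, b), by simpa using he⟩, rfl⟩

variable {H}

lemma antiGallai_adj_sumToEdge (hH : H.CliqueFree 3) (x y : V ⊕ H.edgeSet) :
    (antiGallai (joinOne H)).Adj (sumToEdge H x) (sumToEdge H y) ↔ (semiTotal H).Adj x y := by
  have spoke_edge (v : V) (e : H.edgeSet) :
      (antiGallai (joinOne H)).Adj (sumToEdge H (.inl v)) (sumToEdge H (.inr e)) ↔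
        (semiTotal H).Adj (.inl v) (.inr e) := by
    simpa [antiGallai, sumToEdge, spansTriangle_joinOne_spoke_map_some] using
      fun _ => spoke_ne_map_some v e
  rcases x with v | e <;> rcases y with w | f
  · simpa [antiGallai, sumToEdge, spansTriangle_joinOne_spoke_spoke] using Adj.ne
  · exact spoke_edge v f
  · rw [adj_comm, (semiTotal H).adj_comm]
    exact spoke_edge w e
  · simpa [antiGallai, sumToEdge, spansTriangle_joinOne_map_some] using
      fun _ h => h.not_cliqueFree_three e.2 f.2 hH

end EdgeEquiv

/-- If `G = H ∨ K₁` with `H` triangle-free, then the anti-Gallai graph of `G` is the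
semi-total point graph of `H`. -/
theorem antiGallai_joinOne {V : Type*} (H : SimpleGraph V) (hH : H.CliqueFree 3) :
    Nonempty (antiGallai (joinOne H) ≃g semiTotal H) :=
  ⟨Iso.symm ⟨.ofBijective _ (sumToEdge_bijective H), antiGallai_adj_sumToEdge hH _ _⟩⟩

end GallaiSRG
end
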